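/- arXiv:1612.00722 — 4 statements merged into one kernel-verified Lean document; each statement's English description precedes it below -/
import Mathlib

section
/- The linear map μ defined by μ_i(q) = i(q_i − q_{i+1}) is continuous at 0 with respect to the norm ‖q‖ = ∑_{i≥1} |q_i|/2^i on the set S of nonincreasing sequences with values in [0,1]: for every ε > 0 there exists δ > 0 such that ‖q‖ < δ implies ‖μ(q)‖ < ε, where ‖μ(q)‖ = ∑_{i≥1} i|q_i − q_{i+1}|/2^i. -/
open Filter Topology

/-- The map `μ_i(q) = i (q_i − q_{i+1})` is continuous at `0` on the set `S` of
nonincreasing `[0,1]`-valued sequences, w.r.t. the norm `‖q‖ = ∑_{i≥1} |q_i|/2^i`.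
(Here `q i` stands for the coordinate `q_{i+1}`, so the weight of coordinate `i`
is `(i+1)/2^(i+1)`.) -/
theorem stmt2 :
    ∀ ε : ℝ, 0 < ε → ∃ δ : ℝ, 0 < δ ∧ ∀ q : ℕ → ℝ,
      (∀ i, 0 ≤ q i) → (∀ i, q i ≤ 1) → (∀ i, q (i + 1) ≤ q i) →
      (∑' i, |q i| / 2 ^ (i + 1)) < δ →
      (∑' i : ℕ, ((i : ℝ) + 1) * |q i - q (i + 1)| / 2 ^ (i + 1)) < ε := by
  intro ε hε
  refine ⟨ε, hε, ?_⟩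
  intro q h0 h1 hmono hq
  -- weight series
  set W : ℕ → ℝ := fun i => ((i : ℝ) + 1) / 2 ^ (i + 1) with hWdef
  have hWnonneg : ∀ i, 0 ≤ W i := fun i => by positivity
  have hW : Summable W := by
    have h := (summable_pow_mul_geometric_of_norm_lt_one 1
      (r := (1/2 : ℝ)) (by norm_num)).comp_injective Nat.succ_injective
    refine h.congr fun n => ?_
    simp only [Function.comp, Nat.succ_eq_add_one, pow_one, hWdef]
    push_cast
    rw [one_div, inv_pow, div_eq_mul_inv]
  set t : ℕ → ℝ := fun i => (i : ℝ) * q i / 2 ^ i with ht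
  set c : ℕ → ℝ := fun i => (1 - (i : ℝ)) * q i / 2 ^ (i + 1) with hc
  set F : ℕ → ℝ := fun i => ((i : ℝ) + 1) * (q i - q (i + 1)) / 2 ^ (i + 1) with hF
  have habs : ∀ i, |q i - q (i + 1)| = q i - q (i + 1) :=
    fun i => abs_of_nonneg (sub_nonneg.2 (hmono i))
  have hFW : ∀ i, F i ≤ W i := by
    intro i
    have h2 : (0:ℝ) < 2 ^ (i + 1) := by positivity
    simp only [hF, hWdef]
    rw [div_le_div_iff_of_pos_right h2]
    have hs : q i - q (i + 1) ≤ 1 := by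
      have := h1 i; have := h0 (i + 1); linarith
    nlinarith [Nat.cast_nonneg (α := ℝ) i]
  have hFnonneg : ∀ i, 0 ≤ F i := by
    intro i
    have := hmono i
    have : (0:ℝ) ≤ q i - q (i + 1) := by linarith
    positivity
  have hFsum : Summable F := Summable.of_nonneg_of_le hFnonneg hFW hW
  have hcsum : Summable c := by
    apply Summable.of_abs
    refine Summable.of_nonneg_of_le (fun i => abs_nonneg _) (fun i => ?_) hW
    have h2 : (0:ℝ) < 2 ^ (i + 1) := by positivity
    rw [hc]
    rw [abs_div, abs_of_pos h2, div_le_div_iff_of_pos_right h2, abs_mul]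
    have hq1 : |q i| ≤ 1 := abs_le.2 ⟨by linarith [h0 i], h1 i⟩
    have h1i : |1 - (i:ℝ)| ≤ (i:ℝ) + 1 := by
      have := Nat.cast_nonneg (α := ℝ) i
      rw [abs_le]; constructor <;> linarith
    calc |1 - (i:ℝ)| * |q i| ≤ ((i:ℝ) + 1) * 1 :=
          mul_le_mul h1i hq1 (abs_nonneg _) (by positivity)
      _ = (i:ℝ) + 1 := mul_one _
  have hdecomp : ∀ i, F i = (t i - t (i + 1)) + c i := by
    intro i
    simp only [hF, ht, hc]
    have h2 : ((2:ℝ)) ^ (i + 1) = 2 ^ i * 2 := pow_succ 2 i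
    have h2' : (2:ℝ) ^ i ≠ 0 := by positivity
    push_cast
    field_simp [h2]
    ring
  have hdsum : Summable (fun i => t i - t (i + 1)) := by
    refine (hFsum.sub hcsum).congr fun i => ?_
    rw [hdecomp i]; ring
  -- t tends to 0
  have htend : Tendsto t atTop (𝓝 0) := by
    have hW0 : Tendsto (fun i => 2 * W i) atTop (𝓝 (2 * 0)) :=
      (hW.tendsto_atTop_zero).const_mul 2
    rw [mul_zero] at hW0
    refine squeeze_zero (fun i => ?_) (fun i => ?_) hW0
    · simp only [ht]
      exact div_nonneg (mul_nonneg (Nat.cast_nonneg i) (h0 i)) (by positivity)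
    · simp only [ht, hWdef]
      have h2 : (0:ℝ) < 2 ^ i := by positivity
      have hrw : 2 * (((i:ℝ) + 1) / 2 ^ (i + 1)) = ((i:ℝ) + 1) / 2 ^ i := by
        rw [pow_succ]; field_simp
      rw [hrw, div_le_div_iff_of_pos_right h2]
      nlinarith [h1 i, h0 i, Nat.cast_nonneg (α := ℝ) i]
  -- telescoping sum equals 0
  have ht0 : t 0 = 0 := by simp [ht]
  have hdtsum : ∑' i, (t i - t (i + 1)) = 0 := by
    have hpartial : Tendsto (fun n => ∑ i ∈ Finset.range n, (t i - t (i + 1)))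
        atTop (𝓝 0) := by
      have : ∀ n, ∑ i ∈ Finset.range n, (t i - t (i + 1)) = t 0 - t n :=
        fun n => Finset.sum_range_sub' t n
      simp only [this, ht0, zero_sub]
      simpa using htend.neg
    exact (hdsum.hasSum_iff_tendsto_nat.2 hpartial).tsum_eq
  -- the norm series
  set G : ℕ → ℝ := fun i => |q i| / 2 ^ (i + 1) with hG
  have hGsum : Summable G := by
    refine Summable.of_nonneg_of_le (fun i => by positivity) (fun i => ?_) hW
    simp only [hG, hWdef]
    have h2 : (0:ℝ) < 2 ^ (i + 1) := by positivity
    rw [div_le_div_iff_of_pos_right h2]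
    have := abs_le.2 ⟨by linarith [h0 i], h1 i⟩
    linarith [Nat.cast_nonneg (α := ℝ) i]
  have hcG : ∀ i, c i ≤ G i := by
    intro i
    simp only [hc, hG]
    have h2 : (0:ℝ) < 2 ^ (i + 1) := by positivity
    rw [div_le_div_iff_of_pos_right h2, abs_of_nonneg (h0 i)]
    nlinarith [h0 i, Nat.cast_nonneg (α := ℝ) i]
  have hkey : (∑' i, F i) ≤ ∑' i, G i := by
    calc (∑' i, F i) = ∑' i, ((t i - t (i + 1)) + c i) := by
            exact tsum_congr hdecomp
      _ = (∑' i, (t i - t (i + 1))) + ∑' i, c i := Summable.tsum_add hdsum hcsum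
      _ = ∑' i, c i := by rw [hdtsum, zero_add]
      _ ≤ ∑' i, G i := Summable.tsum_le_tsum hcG hcsum hGsum
  have hgoal : (∑' i : ℕ, ((i : ℝ) + 1) * |q i - q (i + 1)| / 2 ^ (i + 1))
      = ∑' i, F i := tsum_congr fun i => by rw [habs i]
  rw [hgoal]
  exact lt_of_le_of_lt hkey hq
end

section
/- Under the T-coupling of two task-assignment systems Π₁, Π₂ started from the same occupancy state, the inequality ∑_{i=1}^B |Q_i^{Π₁}(t) − Q_i^{Π₂}(t)| ≤ 2·Δ_{Π₁,Π₂}(t) holds for all t ≥ 0, where Δ_{Π₁,Π₂}(t) is the cumulative number of arrival epochs up to time t at which the two systems differ in decision. -/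
/-- `Ifun B N Q k = max {i ≤ B : Q i ≥ N − k + 1}` (and `0` if no such `i`):
the row index affected when the `k`-th ordered server pool gains or loses a task,
in the occupancy representation `Q i = #{pools with ≥ i tasks}`. -/
def Ifun (B N : ℕ) (Q : ℕ → ℤ) (k : ℕ) : ℕ :=
  Nat.findGreatest (fun i => (N : ℤ) - k + 1 ≤ Q i) B

/-- Occupancy update at an arrival assigned to the `k`-th ordered server pool:
increment `Q` at index `Ifun B N Q k + 1` (no change if `Ifun B N Q k = B`). -/
def addQ (B N : ℕ) (Q : ℕ → ℤ) (k : ℕ) : ℕ → ℤ :=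
  fun j => if Ifun B N Q k < B ∧ j = Ifun B N Q k + 1 then Q j + 1 else Q j

/-- Occupancy update at a departure from the `k`-th ordered server pool:
decrement `Q` at index `Ifun B N Q k` (no change if `Ifun B N Q k = 0`). -/
def remQ (B N : ℕ) (Q : ℕ → ℤ) (k : ℕ) : ℕ → ℤ :=
  fun j => if 1 ≤ Ifun B N Q k ∧ j = Ifun B N Q k then Q j - 1 else Q j

/-- Decrement `Q` at the index `i`. -/
def decAt (Q : ℕ → ℤ) (i : ℕ) : ℕ → ℤ := fun j => if j = i then Q j - 1 else Q j

/-- One event of the T-coupling of two systems with occupancy states `Q1, Q2` and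
cumulative differ-in-decision counter `Δ`: a synchronized arrival where both systems
assign to the same rank (`arrSame`), an arrival where the ranks differ (`arrDiff`,
incrementing `Δ`), a coupled departure of a common ('green') task from the `k`-th
ordered pool in both systems (`depGreen`), or a coupled departure of a 'blue' and a
'red' task, i.e. each system loses (at most) one task at a row where it has strictly
more pools than the other system (`depRB`). -/
inductive TStep (B N : ℕ) :
    (ℕ → ℤ) × (ℕ → ℤ) × ℕ → (ℕ → ℤ) × (ℕ → ℤ) × ℕ → Prop
  | arrSame (Q1 Q2 : ℕ → ℤ) (Δ k : ℕ) :
      TStep B N (Q1, Q2, Δ) (addQ B N Q1 k, addQ B N Q2 k, Δ)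
  | arrDiff (Q1 Q2 : ℕ → ℤ) (Δ k1 k2 : ℕ) (hk : k1 ≠ k2) :
      TStep B N (Q1, Q2, Δ) (addQ B N Q1 k1, addQ B N Q2 k2, Δ + 1)
  | depGreen (Q1 Q2 : ℕ → ℤ) (Δ k : ℕ) :
      TStep B N (Q1, Q2, Δ) (remQ B N Q1 k, remQ B N Q2 k, Δ)
  | depRB (Q1 Q2 Q1' Q2' : ℕ → ℤ) (Δ : ℕ)
      (h1 : Q1' = Q1 ∨ ∃ i, Q2 i < Q1 i ∧ Q1' = decAt Q1 i)
      (h2 : Q2' = Q2 ∨ ∃ i, Q1 i < Q2 i ∧ Q2' = decAt Q2 i) :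
      TStep B N (Q1, Q2, Δ) (Q1', Q2', Δ)

section Aux

lemma antichain (Q : ℕ → ℤ) (hm : ∀ i, 1 ≤ i → Q (i + 1) ≤ Q i) :
    ∀ i j : ℕ, 1 ≤ i → i ≤ j → Q j ≤ Q i := by
  intro i j hi hij
  induction j with
  | zero => omega
  | succ j ih =>
    rcases Nat.lt_or_ge i (j + 1) with h | h
    · exact le_trans (hm j (by omega)) (ih (by omega))
    · have : i = j + 1 := by omega
      subst this; exact le_refl _

lemma Ifun_le (B N : ℕ) (Q : ℕ → ℤ) (k : ℕ) : Ifun B N Q k ≤ B :=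
  Nat.findGreatest_le B

lemma Ifun_spec (B N : ℕ) (Q : ℕ → ℤ) (k : ℕ) (h : Ifun B N Q k ≠ 0) :
    (N : ℤ) - k + 1 ≤ Q (Ifun B N Q k) :=
  Nat.findGreatest_of_ne_zero rfl h

lemma Ifun_not (B N : ℕ) (Q : ℕ → ℤ) (k j : ℕ) (h1 : Ifun B N Q k < j) (h2 : j ≤ B) :
    ¬ ((N : ℤ) - k + 1 ≤ Q j) :=
  Nat.findGreatest_is_greatest h1 h2

lemma addQ_cases (B N : ℕ) (Q : ℕ → ℤ) (k j : ℕ) :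
    addQ B N Q k j = Q j ∨
      (Ifun B N Q k < B ∧ j = Ifun B N Q k + 1 ∧ addQ B N Q k j = Q j + 1) := by
  unfold addQ
  split_ifs with h
  · exact Or.inr ⟨h.1, h.2, rfl⟩
  · exact Or.inl rfl

lemma addQ_eq_of_ne (B N : ℕ) (Q : ℕ → ℤ) (k j : ℕ) (h : j ≠ Ifun B N Q k + 1) :
    addQ B N Q k j = Q j := by simp [addQ, h]

lemma addQ_self (B N : ℕ) (Q : ℕ → ℤ) (k : ℕ) (h : Ifun B N Q k < B) :
    addQ B N Q k (Ifun B N Q k + 1) = Q (Ifun B N Q k + 1) + 1 := by simp [addQ, h]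

lemma remQ_cases (B N : ℕ) (Q : ℕ → ℤ) (k j : ℕ) :
    remQ B N Q k j = Q j ∨
      (1 ≤ Ifun B N Q k ∧ j = Ifun B N Q k ∧ remQ B N Q k j = Q j - 1) := by
  unfold remQ
  split_ifs with h
  · exact Or.inr ⟨h.1, h.2, rfl⟩
  · exact Or.inl rfl

lemma remQ_eq_of_ne (B N : ℕ) (Q : ℕ → ℤ) (k j : ℕ) (h : j ≠ Ifun B N Q k) :
    remQ B N Q k j = Q j := by simp [remQ, h]

lemma remQ_self (B N : ℕ) (Q : ℕ → ℤ) (k : ℕ) (h : 1 ≤ Ifun B N Q k) :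
    remQ B N Q k (Ifun B N Q k) = Q (Ifun B N Q k) - 1 := by simp [remQ, h]

lemma sum_two (B a b : ℕ) (ha : a ∈ Finset.Icc 1 B) (hab : a ≠ b) :
    ∑ i ∈ Finset.Icc 1 B, (if i = a then (-1 : ℤ) else if i = b then 1 else 0) ≤ 0 := by
  have hpt : ∀ i ∈ Finset.Icc 1 B,
      (if i = a then (-1 : ℤ) else if i = b then 1 else 0) =
        (if i = a then (-1 : ℤ) else 0) + (if i = b then (1 : ℤ) else 0) := by
    intro i _
    by_cases h1 : i = a
    · subst h1
      rw [if_pos rfl, if_pos rfl, if_neg hab, add_zero]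
    · rw [if_neg h1, if_neg h1]
      exact (zero_add _).symm
  rw [Finset.sum_congr rfl hpt, Finset.sum_add_distrib,
    Finset.sum_ite_eq' (Finset.Icc 1 B) a (fun _ => (-1 : ℤ)),
    Finset.sum_ite_eq' (Finset.Icc 1 B) b (fun _ => (1 : ℤ))]
  rw [if_pos ha]
  split_ifs <;> norm_num

lemma abs4 (a b a' b' : ℤ) : |a' - b'| ≤ |a - b| + |a' - a| + |b' - b| := by
  calc |a' - b'| ≤ |a' - a| + |a - b'| := abs_sub_le _ _ _
    _ ≤ |a' - a| + (|a - b| + |b - b'|) := by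
        have := abs_sub_le a b b'
        linarith
    _ = |a - b| + |a' - a| + |b' - b| := by rw [abs_sub_comm b b']; ring

lemma arr_le (B N k : ℕ) (Q1 Q2 : ℕ → ℤ)
    (hm2 : ∀ i, 1 ≤ i → Q2 (i + 1) ≤ Q2 i)
    (hlt : Ifun B N Q1 k < Ifun B N Q2 k) :
    ∑ i ∈ Finset.Icc 1 B, |addQ B N Q1 k i - addQ B N Q2 k i| ≤
      ∑ i ∈ Finset.Icc 1 B, |Q1 i - Q2 i| := by
  have hI2B : Ifun B N Q2 k ≤ B := Ifun_le B N Q2 k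
  have h1B : Ifun B N Q1 k < B := lt_of_lt_of_le hlt hI2B
  have hQ1 : ¬ ((N : ℤ) - k + 1 ≤ Q1 (Ifun B N Q1 k + 1)) :=
    Ifun_not B N Q1 k _ (by omega) (by omega)
  have hQ2I2 : (N : ℤ) - k + 1 ≤ Q2 (Ifun B N Q2 k) := Ifun_spec B N Q2 k (by omega)
  have hQ2 : (N : ℤ) - k + 1 ≤ Q2 (Ifun B N Q1 k + 1) :=
    le_trans hQ2I2 (antichain Q2 hm2 _ _ (by omega) (by omega))
  have key : Q1 (Ifun B N Q1 k + 1) < Q2 (Ifun B N Q1 k + 1) := by omega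
  have hne : Ifun B N Q1 k + 1 ≠ Ifun B N Q2 k + 1 := by omega
  have hpt : ∀ i ∈ Finset.Icc 1 B,
      |addQ B N Q1 k i - addQ B N Q2 k i| ≤ |Q1 i - Q2 i| +
        (if i = Ifun B N Q1 k + 1 then (-1 : ℤ) else if i = Ifun B N Q2 k + 1 then 1 else 0) := by
    intro i _
    by_cases e1 : i = Ifun B N Q1 k + 1
    · subst e1
      rw [addQ_self B N Q1 k h1B, addQ_eq_of_ne B N Q2 k _ hne, if_pos rfl]
      rw [abs_of_nonpos (by omega), abs_of_nonpos (by omega)]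
      omega
    · rw [addQ_eq_of_ne B N Q1 k i e1, if_neg e1]
      rcases addQ_cases B N Q2 k i with h | ⟨_, e2, h⟩
      · rw [h]
        split_ifs <;> simp
      · rw [h, if_pos e2]
        have := abs4 (Q1 i) (Q2 i) (Q1 i) (Q2 i + 1)
        simp at this
        linarith
  calc ∑ i ∈ Finset.Icc 1 B, |addQ B N Q1 k i - addQ B N Q2 k i|
      ≤ ∑ i ∈ Finset.Icc 1 B, (|Q1 i - Q2 i| +
        (if i = Ifun B N Q1 k + 1 then (-1 : ℤ) else if i = Ifun B N Q2 k + 1 then 1 else 0)) :=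
        Finset.sum_le_sum hpt
    _ = ∑ i ∈ Finset.Icc 1 B, |Q1 i - Q2 i| +
        ∑ i ∈ Finset.Icc 1 B,
          (if i = Ifun B N Q1 k + 1 then (-1 : ℤ) else if i = Ifun B N Q2 k + 1 then 1 else 0) :=
        Finset.sum_add_distrib
    _ ≤ ∑ i ∈ Finset.Icc 1 B, |Q1 i - Q2 i| + 0 := by
        have := sum_two B (Ifun B N Q1 k + 1) (Ifun B N Q2 k + 1)
          (Finset.mem_Icc.2 ⟨by omega, by omega⟩) hne
        linarith
    _ = ∑ i ∈ Finset.Icc 1 B, |Q1 i - Q2 i| := add_zero _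

lemma dep_le (B N k : ℕ) (Q1 Q2 : ℕ → ℤ)
    (hlt : Ifun B N Q1 k < Ifun B N Q2 k) :
    ∑ i ∈ Finset.Icc 1 B, |remQ B N Q1 k i - remQ B N Q2 k i| ≤
      ∑ i ∈ Finset.Icc 1 B, |Q1 i - Q2 i| := by
  have hI2B : Ifun B N Q2 k ≤ B := Ifun_le B N Q2 k
  have hQ2 : (N : ℤ) - k + 1 ≤ Q2 (Ifun B N Q2 k) := Ifun_spec B N Q2 k (by omega)
  have hQ1 : ¬ ((N : ℤ) - k + 1 ≤ Q1 (Ifun B N Q2 k)) :=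
    Ifun_not B N Q1 k _ hlt hI2B
  have key : Q1 (Ifun B N Q2 k) < Q2 (Ifun B N Q2 k) := by omega
  have hne : Ifun B N Q2 k ≠ Ifun B N Q1 k := by omega
  have hpt : ∀ i ∈ Finset.Icc 1 B,
      |remQ B N Q1 k i - remQ B N Q2 k i| ≤ |Q1 i - Q2 i| +
        (if i = Ifun B N Q2 k then (-1 : ℤ) else if i = Ifun B N Q1 k then 1 else 0) := by
    intro i _
    by_cases e1 : i = Ifun B N Q2 k
    · subst e1
      rw [remQ_self B N Q2 k (by omega), remQ_eq_of_ne B N Q1 k _ hne, if_pos rfl]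
      rw [abs_of_nonpos (by omega), abs_of_nonpos (by omega)]
      omega
    · rw [remQ_eq_of_ne B N Q2 k i e1, if_neg e1]
      rcases remQ_cases B N Q1 k i with h | ⟨_, e2, h⟩
      · rw [h]
        split_ifs <;> simp
      · rw [h, if_pos e2]
        have := abs4 (Q1 i) (Q2 i) (Q1 i - 1) (Q2 i)
        simp at this
        linarith
  calc ∑ i ∈ Finset.Icc 1 B, |remQ B N Q1 k i - remQ B N Q2 k i|
      ≤ ∑ i ∈ Finset.Icc 1 B, (|Q1 i - Q2 i| +
        (if i = Ifun B N Q2 k then (-1 : ℤ) else if i = Ifun B N Q1 k then 1 else 0)) :=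
        Finset.sum_le_sum hpt
    _ = ∑ i ∈ Finset.Icc 1 B, |Q1 i - Q2 i| +
        ∑ i ∈ Finset.Icc 1 B,
          (if i = Ifun B N Q2 k then (-1 : ℤ) else if i = Ifun B N Q1 k then 1 else 0) :=
        Finset.sum_add_distrib
    _ ≤ ∑ i ∈ Finset.Icc 1 B, |Q1 i - Q2 i| + 0 := by
        have := sum_two B (Ifun B N Q2 k) (Ifun B N Q1 k)
          (Finset.mem_Icc.2 ⟨by omega, by omega⟩) hne
        linarith
    _ = ∑ i ∈ Finset.Icc 1 B, |Q1 i - Q2 i| := add_zero _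

end Aux

lemma step_bound (B N : ℕ) (p q : (ℕ → ℤ) × (ℕ → ℤ) × ℕ)
    (hm1 : ∀ i, 1 ≤ i → p.1 (i + 1) ≤ p.1 i)
    (hm2 : ∀ i, 1 ≤ i → p.2.1 (i + 1) ≤ p.2.1 i)
    (h : TStep B N p q) :
    ∑ i ∈ Finset.Icc 1 B, |q.1 i - q.2.1 i| ≤
      ∑ i ∈ Finset.Icc 1 B, |p.1 i - p.2.1 i| + 2 * ((q.2.2 : ℤ) - (p.2.2 : ℤ)) := by
  have habs_sub : ∀ (f g : ℕ → ℤ), ∑ i ∈ Finset.Icc 1 B, |f i - g i| =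
      ∑ i ∈ Finset.Icc 1 B, |g i - f i| :=
    fun f g => Finset.sum_congr rfl (fun i _ => abs_sub_comm _ _)
  cases h with
  | arrSame Q1 Q2 Δ k =>
    dsimp only at hm1 hm2 ⊢
    rcases lt_trichotomy (Ifun B N Q1 k) (Ifun B N Q2 k) with hI | hI | hI
    · linarith [arr_le B N k Q1 Q2 hm2 hI]
    · have heq : ∀ i ∈ Finset.Icc 1 B,
          |addQ B N Q1 k i - addQ B N Q2 k i| = |Q1 i - Q2 i| := by
        intro i _
        unfold addQ
        rw [hI]
        split_ifs with hc
        · congr 1; ring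
        · rfl
      rw [Finset.sum_congr rfl heq]
      linarith
    · rw [habs_sub (addQ B N Q1 k) (addQ B N Q2 k), habs_sub Q1 Q2]
      linarith [arr_le B N k Q2 Q1 hm1 hI]
  | arrDiff Q1 Q2 Δ k1 k2 hk =>
    dsimp only at hm1 hm2 ⊢
    have hpt : ∀ i ∈ Finset.Icc 1 B,
        |addQ B N Q1 k1 i - addQ B N Q2 k2 i| ≤ |Q1 i - Q2 i| +
          ((if i = Ifun B N Q1 k1 + 1 then (1 : ℤ) else 0) +
            (if i = Ifun B N Q2 k2 + 1 then (1 : ℤ) else 0)) := by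
      intro i _
      have h1 : |addQ B N Q1 k1 i - Q1 i| ≤ (if i = Ifun B N Q1 k1 + 1 then (1 : ℤ) else 0) := by
        rcases addQ_cases B N Q1 k1 i with h | ⟨_, e, h⟩
        · rw [h, sub_self, abs_zero]; split_ifs <;> norm_num
        · rw [h, if_pos e]; simp
      have h2 : |addQ B N Q2 k2 i - Q2 i| ≤ (if i = Ifun B N Q2 k2 + 1 then (1 : ℤ) else 0) := by
        rcases addQ_cases B N Q2 k2 i with h | ⟨_, e, h⟩
        · rw [h, sub_self, abs_zero]; split_ifs <;> norm_num
        · rw [h, if_pos e]; simp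
      have h3 := abs4 (Q1 i) (Q2 i) (addQ B N Q1 k1 i) (addQ B N Q2 k2 i)
      linarith
    have s1 : ∑ i ∈ Finset.Icc 1 B, (if i = Ifun B N Q1 k1 + 1 then (1 : ℤ) else 0) ≤ 1 := by
      rw [Finset.sum_ite_eq' (Finset.Icc 1 B) _ (fun _ => (1 : ℤ))]
      split_ifs <;> norm_num
    have s2 : ∑ i ∈ Finset.Icc 1 B, (if i = Ifun B N Q2 k2 + 1 then (1 : ℤ) else 0) ≤ 1 := by
      rw [Finset.sum_ite_eq' (Finset.Icc 1 B) _ (fun _ => (1 : ℤ))]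
      split_ifs <;> norm_num
    have hc := Finset.sum_le_sum hpt
    rw [Finset.sum_add_distrib, Finset.sum_add_distrib] at hc
    push_cast
    linarith
  | depGreen Q1 Q2 Δ k =>
    dsimp only at hm1 hm2 ⊢
    rcases lt_trichotomy (Ifun B N Q1 k) (Ifun B N Q2 k) with hI | hI | hI
    · linarith [dep_le B N k Q1 Q2 hI]
    · have heq : ∀ i ∈ Finset.Icc 1 B,
          |remQ B N Q1 k i - remQ B N Q2 k i| = |Q1 i - Q2 i| := by
        intro i _
        unfold remQ
        rw [hI]
        split_ifs with hc
        · congr 1; ring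
        · rfl
      rw [Finset.sum_congr rfl heq]
      linarith
    · rw [habs_sub (remQ B N Q1 k) (remQ B N Q2 k), habs_sub Q1 Q2]
      linarith [dep_le B N k Q2 Q1 hI]
  | depRB Q1 Q2 Q1' Q2' Δ h1 h2 =>
    dsimp only at hm1 hm2 ⊢
    have hpt : ∀ i ∈ Finset.Icc 1 B, |Q1' i - Q2' i| ≤ |Q1 i - Q2 i| := by
      intro i _
      have v1 : Q1' i = Q1 i ∨ (Q2 i < Q1 i ∧ Q1' i = Q1 i - 1) := by
        rcases h1 with rfl | ⟨i0, hi0, rfl⟩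
        · exact Or.inl rfl
        · unfold decAt
          split_ifs with h
          · exact Or.inr ⟨by rw [h]; exact hi0, by rw [h]⟩
          · exact Or.inl rfl
      have v2 : Q2' i = Q2 i ∨ (Q1 i < Q2 i ∧ Q2' i = Q2 i - 1) := by
        rcases h2 with rfl | ⟨i0, hi0, rfl⟩
        · exact Or.inl rfl
        · unfold decAt
          split_ifs with h
          · exact Or.inr ⟨by rw [h]; exact hi0, by rw [h]⟩
          · exact Or.inl rfl
      rcases v1 with e1 | ⟨l1, e1⟩ <;> rcases v2 with e2 | ⟨l2, e2⟩
      · rw [e1, e2]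
      · rw [e1, e2]
        rw [abs_of_nonpos (by omega), abs_of_nonpos (by omega)]
        omega
      · rw [e1, e2]
        rw [abs_of_nonneg (by omega), abs_of_nonneg (by omega)]
        omega
      · exact absurd l2 (by omega)
    linarith [Finset.sum_le_sum hpt]

/-- Under the T-coupling of two task-assignment systems started from the same
occupancy state (with the occupancy vectors nonincreasing in the row index, as
holds for ordered server pools), the inequality
`∑_{i=1}^B |Q_i^{Π₁}(t) − Q_i^{Π₂}(t)| ≤ 2 Δ(t)` holds at every event time `t`,
where `Δ(t)` is the cumulative number of arrival epochs at which the two systems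
differ in decision. -/
theorem stmt11 (B N : ℕ)
    (s : ℕ → (ℕ → ℤ) × (ℕ → ℤ) × ℕ)
    (h0 : (s 0).1 = (s 0).2.1) (hd0 : (s 0).2.2 = 0)
    (hstep : ∀ t, TStep B N (s t) (s (t + 1)))
    (hmono1 : ∀ t i, 1 ≤ i → (s t).1 (i + 1) ≤ (s t).1 i)
    (hmono2 : ∀ t i, 1 ≤ i → (s t).2.1 (i + 1) ≤ (s t).2.1 i) :
    ∀ t, ∑ i ∈ Finset.Icc 1 B, |(s t).1 i - (s t).2.1 i| ≤ 2 * ((s t).2.2 : ℤ) := by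
  intro t
  induction t with
  | zero => rw [h0, hd0]; simp
  | succ t ih =>
    have hb := step_bound B N (s t) (s (t + 1)) (hmono1 t) (hmono2 t) (hstep t)
    linarith
end

section
/- Under the T-coupling, for every k ∈ {1,...,B} and all t ≥ 0, the sandwich inequality ∑_{i=1}^k Q_i^{JSQ}(t) − k·n(N) ≤ ∑_{i=1}^k Q_i^{CJSQ}(t) ≤ ∑_{i=1}^k Q_i^{JSQ}(t) holds pathwise, provided both systems start from the same occupancy state, where CJSQ is any scheme that always assigns an incoming task to one of the n(N)+1 lowest-ordered server pools. -/
/-- `partS Q k = ∑_{i=1}^k Q i`, the partial sums of the occupancy state. -/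
def partS (Q : ℕ → ℤ) (k : ℕ) : ℤ := ∑ i ∈ Finset.Icc 1 k, Q i

/-- One event of the T-coupling of the ordinary JSQ policy (state `Q1`) with a
scheme of the class CJSQ(n) (state `Q2`).  At a synchronized arrival, JSQ assigns
the task to a pool with the minimum number of tasks (rank `1`) while the CJSQ(n)
scheme assigns it to one of the `n+1` lowest ordered pools (rank `k ≤ n+1`).
At a coupled departure each partial sum `∑_{i≤k} Q_i` decreases by at most one,
and whenever the smaller of the two partial sums decreases, so does the larger
one (the defining property of the T-coupled departures). -/
inductive CStep (B N n : ℕ) :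
    (ℕ → ℤ) × (ℕ → ℤ) → (ℕ → ℤ) × (ℕ → ℤ) → Prop
  | arrival (Q1 Q2 : ℕ → ℤ) (k : ℕ) (hk1 : 1 ≤ k) (hk2 : k ≤ n + 1) :
      CStep B N n (Q1, Q2) (addQ B N Q1 1, addQ B N Q2 k)
  | departure (Q1 Q2 Q1' Q2' : ℕ → ℤ)
      (hd1 : ∀ k, partS Q1' k = partS Q1 k ∨ partS Q1' k = partS Q1 k - 1)
      (hd2 : ∀ k, partS Q2' k = partS Q2 k ∨ partS Q2' k = partS Q2 k - 1)
      (hcpl : ∀ k,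
        (partS Q2 k ≤ partS Q1 k → partS Q2' k = partS Q2 k - 1 →
          partS Q1' k = partS Q1 k - 1) ∧
        (partS Q1 k ≤ partS Q2 k → partS Q1' k = partS Q1 k - 1 →
          partS Q2' k = partS Q2 k - 1)) :
      CStep B N n (Q1, Q2) (Q1', Q2')

lemma anti_of_step (Q : ℕ → ℤ) (h : ∀ i, 1 ≤ i → Q (i+1) ≤ Q i) :
    ∀ i j, 1 ≤ i → i ≤ j → Q j ≤ Q i := by
  intro i j hi hij
  induction j with
  | zero => omega
  | succ j ih =>
    rcases Nat.lt_or_ge i (j+1) with h' | h'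
    · exact le_trans (h j (by omega)) (ih (by omega))
    · have : i = j + 1 := by omega
      simp [this]

lemma partS_addQ (B N : ℕ) (Q : ℕ → ℤ) (k m : ℕ) (hm : m ≤ B) :
    partS (addQ B N Q k) m = partS Q m + (if Ifun B N Q k < m then 1 else 0) := by
  classical
  unfold partS addQ
  have key : ∀ i, (if Ifun B N Q k < B ∧ i = Ifun B N Q k + 1 then Q i + 1 else Q i)
      = Q i + (if Ifun B N Q k < B ∧ i = Ifun B N Q k + 1 then (1:ℤ) else 0) := by
    intro i; split <;> simp
  simp only [key, Finset.sum_add_distrib]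
  congr 1
  by_cases hB : Ifun B N Q k < B
  · simp only [hB, true_and]
    rw [Finset.sum_ite_eq' (Finset.Icc 1 m) (Ifun B N Q k + 1) (fun _ => (1:ℤ))]
    simp only [Finset.mem_Icc]
    by_cases h : Ifun B N Q k < m
    · rw [if_pos (by omega), if_pos h]
    · rw [if_neg (by omega), if_neg h]
  · have : ¬ Ifun B N Q k < m := by omega
    simp [hB, this]

lemma partS_le_bound (N : ℕ) (Q : ℕ → ℤ) (m : ℕ) (c : ℤ) (hm : 1 ≤ m)
    (hbox : ∀ i, 1 ≤ i → Q i ≤ N) (hc : Q m ≤ c) :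
    partS Q m ≤ ((m : ℤ) - 1) * N + c := by
  obtain ⟨m', rfl⟩ : ∃ m', m = m' + 1 := ⟨m - 1, by omega⟩
  unfold partS
  rw [Finset.sum_Icc_succ_top (by omega)]
  have h1 : ∑ i ∈ Finset.Icc 1 m', Q i ≤ (m' : ℤ) * N := by
    calc ∑ i ∈ Finset.Icc 1 m', Q i ≤ ∑ _i ∈ Finset.Icc 1 m', (N:ℤ) :=
          Finset.sum_le_sum (fun i hi => hbox i (Finset.mem_Icc.mp hi).1)
      _ = (m' : ℤ) * N := by
          simp [Finset.sum_const, Nat.card_Icc, nsmul_eq_mul]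
  push_cast
  linarith

lemma partS_ge_bound (Q : ℕ → ℤ) (m : ℕ) (c : ℤ)
    (h : ∀ i, 1 ≤ i → i ≤ m → c ≤ Q i) :
    (m : ℤ) * c ≤ partS Q m := by
  unfold partS
  calc (m:ℤ) * c = ∑ _i ∈ Finset.Icc 1 m, c := by
        simp [Finset.sum_const, Nat.card_Icc, nsmul_eq_mul]
    _ ≤ _ := Finset.sum_le_sum fun i hi =>
        h i (Finset.mem_Icc.mp hi).1 (Finset.mem_Icc.mp hi).2

lemma Ifun_ge (B N : ℕ) (Q : ℕ → ℤ) (k m : ℕ) (hm : 1 ≤ m)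
    (hmono : ∀ i, 1 ≤ i → Q (i+1) ≤ Q i) (h : m ≤ Ifun B N Q k) :
    (N : ℤ) - k + 1 ≤ Q m := by
  have h0 : Ifun B N Q k ≠ 0 := by omega
  have hP : (N : ℤ) - k + 1 ≤ Q (Ifun B N Q k) :=
    Nat.findGreatest_of_ne_zero rfl h0
  exact le_trans hP (anti_of_step Q hmono m (Ifun B N Q k) hm h)

lemma Ifun_lt (B N : ℕ) (Q : ℕ → ℤ) (k m : ℕ) (hmB : m ≤ B)
    (h : Ifun B N Q k < m) : Q m ≤ (N : ℤ) - k := by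
  have := Nat.findGreatest_is_greatest (P := fun i => (N : ℤ) - k + 1 ≤ Q i) h hmB
  omega

/-- Under the T-coupling, for every `k ∈ {1,…,B}` and every (event) time `t`, the
sandwich `∑_{i=1}^k Q_i^{JSQ}(t) − k·n ≤ ∑_{i=1}^k Q_i^{CJSQ}(t) ≤ ∑_{i=1}^k Q_i^{JSQ}(t)`
holds pathwise, provided both systems start from the same occupancy state.  Here
`Q1` is the occupancy process of the JSQ policy and `Q2` that of a scheme in the
class CJSQ(n), with occupancy states nonincreasing in the row index and bounded
by the number `N` of server pools. -/
theorem stmt12 (B N n : ℕ)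
    (s : ℕ → (ℕ → ℤ) × (ℕ → ℤ))
    (h0 : (s 0).1 = (s 0).2)
    (hstep : ∀ t, CStep B N n (s t) (s (t + 1)))
    (hbox1 : ∀ t i, 1 ≤ i → 0 ≤ (s t).1 i ∧ (s t).1 i ≤ N)
    (hbox2 : ∀ t i, 1 ≤ i → 0 ≤ (s t).2 i ∧ (s t).2 i ≤ N)
    (hmono1 : ∀ t i, 1 ≤ i → (s t).1 (i + 1) ≤ (s t).1 i)
    (hmono2 : ∀ t i, 1 ≤ i → (s t).2 (i + 1) ≤ (s t).2 i) :
    ∀ t, ∀ k, 1 ≤ k → k ≤ B →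
      partS (s t).1 k - (k : ℤ) * n ≤ partS (s t).2 k ∧
      partS (s t).2 k ≤ partS (s t).1 k := by
  intro t
  induction t with
  | zero =>
    intro k hk1 hkB
    rw [h0]
    refine ⟨?_, le_refl _⟩
    have : (0:ℤ) ≤ (k:ℤ) * n := by positivity
    linarith
  | succ t ih =>
    intro m hm1 hmB
    have hmn : (0:ℤ) ≤ (m:ℤ) * n := by positivity
    have h := hstep t
    generalize hp : s t = p at h
    generalize hq : s (t+1) = q at h
    cases h with
    | arrival Q1 Q2 k hk1 hk2 =>
      have hQ1 : (s t).1 = Q1 := by rw [hp]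
      have hQ2 : (s t).2 = Q2 := by rw [hp]
      obtain ⟨ihl, ihr⟩ := ih m hm1 hmB
      rw [hQ1, hQ2] at ihl ihr
      dsimp only
      rw [partS_addQ B N Q1 1 m hmB, partS_addQ B N Q2 k m hmB]
      have hk1' : (1:ℤ) ≤ (k:ℤ) := by exact_mod_cast hk1
      have e3 : (m:ℤ) * ((N:ℤ) - (n:ℤ)) = (m:ℤ)*N - (m:ℤ)*n := by ring
      have e4 : ((m:ℤ) - 1) * N = (m:ℤ)*N - N := by ring
      by_cases h1 : Ifun B N Q1 1 < m <;> by_cases h2 : Ifun B N Q2 k < m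
      · simp only [if_pos h1, if_pos h2]
        constructor <;> linarith
      · simp only [if_pos h1, if_neg h2]
        have hge : ∀ i, 1 ≤ i → i ≤ m → (N:ℤ) - (n:ℤ) ≤ Q2 i := by
          intro i hi him
          have hmono : ∀ j, 1 ≤ j → Q2 (j+1) ≤ Q2 j := by
            intro j hj; have := hmono2 t j hj; rwa [hQ2] at this
          have := Ifun_ge B N Q2 k i hi hmono (by omega)
          omega
        have hlow : (m:ℤ) * ((N:ℤ) - (n:ℤ)) ≤ partS Q2 m := partS_ge_bound Q2 m _ hge
        have hup : partS Q1 m ≤ ((m:ℤ) - 1) * N + ((N:ℤ) - 1) := by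
          apply partS_le_bound N Q1 m ((N:ℤ) - 1) hm1
          · intro i hi; have := (hbox1 t i hi).2; rwa [hQ1] at this
          · have := Ifun_lt B N Q1 1 m hmB h1; push_cast at this ⊢; linarith
        constructor
        · linarith
        · linarith
      · simp only [if_neg h1, if_pos h2]
        have hge : ∀ i, 1 ≤ i → i ≤ m → (N:ℤ) ≤ Q1 i := by
          intro i hi him
          have hmono : ∀ j, 1 ≤ j → Q1 (j+1) ≤ Q1 j := by
            intro j hj; have := hmono1 t j hj; rwa [hQ1] at this
          have := Ifun_ge B N Q1 1 i hi hmono (by omega)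
          omega
        have hlow : (m:ℤ) * (N:ℤ) ≤ partS Q1 m := partS_ge_bound Q1 m _ hge
        have hup : partS Q2 m ≤ ((m:ℤ) - 1) * N + ((N:ℤ) - (k:ℤ)) := by
          apply partS_le_bound N Q2 m ((N:ℤ) - (k:ℤ)) hm1
          · intro i hi; have := (hbox2 t i hi).2; rwa [hQ2] at this
          · exact Ifun_lt B N Q2 k m hmB h2
        constructor
        · linarith
        · linarith
      · simp only [if_neg h1, if_neg h2]
        constructor <;> linarith
    | departure Q1 Q2 Q1' Q2' hd1 hd2 hcpl =>
      have hQ1 : (s t).1 = Q1 := by rw [hp]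
      have hQ2 : (s t).2 = Q2 := by rw [hp]
      obtain ⟨ihl, ihr⟩ := ih m hm1 hmB
      rw [hQ1, hQ2] at ihl ihr
      dsimp only
      obtain ⟨c1, c2⟩ := hcpl m
      rcases hd1 m with d1 | d1 <;> rcases hd2 m with d2 | d2
      · constructor <;> rw [d1, d2] <;> linarith
      · have := c1 ihr d2
        rw [d1] at this
        exact absurd this (by omega)
      · constructor
        · rw [d1, d2]; linarith
        · rcases lt_or_eq_of_le ihr with hlt | heq
          · rw [d1, d2]; omega
          · have := c2 (le_of_eq heq.symm) d1
            rw [d2] at this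
            exact absurd this (by omega)
      · constructor <;> rw [d1, d2] <;> linarith
end

section
/- Let L^{d(N)} be the steady-state loss probability of the JSQ(d(N)) system, L(C,λ) that of an Erlang loss system Er(C,λ), and L̂(n,d) that of a modified Erlang system with capacity B(N−n) and admission probability 1 − p(n,d) with p(n,d) = (1 − (n+1)/N)^d. If the total-task processes satisfy the stochastic ordering Y^N_{Êr}(t) ≤_{st} Y^{d(N)}(t) ≤_{st} Y^N_{Er}(t) for all t, then by Little's law L(BN, λ(N)) ≤ L^{d(N)} ≤ L̂(n(N), d(N)). -/
open Filter MeasureTheory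

lemma avg_le_avg (f g : ℝ → ℝ)
    (hf : ∀ T : ℝ, IntervalIntegrable f volume 0 T)
    (hg : ∀ T : ℝ, IntervalIntegrable g volume 0 T)
    (hfg : ∀ t, f t ≤ g t) (A B : ℝ)
    (hA : Tendsto (fun T : ℝ => (1 / T) * ∫ t in (0:ℝ)..T, f t) atTop (nhds A))
    (hB : Tendsto (fun T : ℝ => (1 / T) * ∫ t in (0:ℝ)..T, g t) atTop (nhds B)) :
    A ≤ B := by
  refine le_of_tendsto_of_tendsto hA hB ?_
  filter_upwards [eventually_gt_atTop (0:ℝ)] with T hT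
  have hI : (∫ t in (0:ℝ)..T, f t) ≤ ∫ t in (0:ℝ)..T, g t :=
    intervalIntegral.integral_mono_on hT.le (hf T) (hg T) (fun t _ => hfg t)
  exact mul_le_mul_of_nonneg_left hI (by positivity)

/-- If the total-task processes of the modified Erlang system `Êr`, the JSQ(d(N))
system, and the Erlang loss system `Er` are pathwise ordered
`Y_{Êr}(t) ≤ Y_{d(N)}(t) ≤ Y_{Er}(t)` (a realization of the stochastic ordering on a
common probability space), then by Little's law
`L = 1 − (1/λ)·lim_{T→∞}(1/T)∫₀^T Y(t) dt` the steady-state loss probabilities are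
ordered as `L(BN, λ(N)) ≤ L^{d(N)} ≤ L̂(n(N), d(N))`. -/
theorem stmt16 (lam : ℝ) (hlam : 0 < lam)
    (Yhat Yd Yer : ℝ → ℝ)
    (hint : ∀ T : ℝ, IntervalIntegrable Yhat volume 0 T ∧
      IntervalIntegrable Yd volume 0 T ∧ IntervalIntegrable Yer volume 0 T)
    (hord : ∀ t : ℝ, Yhat t ≤ Yd t ∧ Yd t ≤ Yer t)
    (Ahat Ad Aer Lhat Ld Ler : ℝ)
    (h1 : Tendsto (fun T : ℝ => (1 / T) * ∫ t in (0:ℝ)..T, Yhat t) atTop (nhds Ahat))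
    (h2 : Tendsto (fun T : ℝ => (1 / T) * ∫ t in (0:ℝ)..T, Yd t) atTop (nhds Ad))
    (h3 : Tendsto (fun T : ℝ => (1 / T) * ∫ t in (0:ℝ)..T, Yer t) atTop (nhds Aer))
    (hLhat : Lhat = 1 - Ahat / lam) (hLd : Ld = 1 - Ad / lam)
    (hLer : Ler = 1 - Aer / lam) :
    Ler ≤ Ld ∧ Ld ≤ Lhat := by
  have hab : Ahat ≤ Ad :=
    avg_le_avg Yhat Yd (fun T => (hint T).1) (fun T => (hint T).2.1)
      (fun t => (hord t).1) _ _ h1 h2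
  have hbc : Ad ≤ Aer :=
    avg_le_avg Yd Yer (fun T => (hint T).2.1) (fun T => (hint T).2.2)
      (fun t => (hord t).2) _ _ h2 h3
  subst hLhat hLd hLer
  constructor <;> [skip; skip] <;>
    · have := hlam
      gcongr
end
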